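/- For every p ∈ (0, 1], the inverse binary entropy H₂⁻¹(p), defined as the unique t ∈ [0, 1/2] with H₂(t) = p, satisfies H₂⁻¹(p) ≥ p / (2 · log₂(6 / p)). -/

import Mathlib

/-- The binary entropy function `H₂(t) = −t·log₂ t − (1−t)·log₂(1−t)` (with the
convention `0 · log₂ 0 = 0`, which holds automatically since `Real.log 0 = 0`). -/
noncomputable def binEnt (t : ℝ) : ℝ :=
  -(t * Real.logb 2 t) - (1 - t) * Real.logb 2 (1 - t)

/-!
Measured in nats, `H₂(t) · log 2 = -t log t - (1 - t) log (1 - t) ≤ t (1 - log t)`, since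
`-(1 - t) log (1 - t) ≤ t`. The bound `t (1 - log t) ≤ 2 √(t / e)` then forces
`t ≥ e p² (log 2)² / 4 ≥ e p² / 36` (as `log 2 > 1/3`), i.e. `1 - log t = log (e / t) ≤ 2 log (6 / p)`.
Feeding this back into the first estimate gives `p log 2 ≤ 2 t log (6 / p)`.
-/

open Real

lemma binEnt_mul_log_two (t : ℝ) : binEnt t * log 2 = binEntropy t := by
  have : log 2 ≠ 0 := (log_pos one_lt_two).ne'
  simp only [binEnt, binEntropy, logb, log_inv]
  field_simp
  ring

namespace Real

variable {t : ℝ}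

lemma binEntropy_le_mul_one_sub_log (ht : t ≤ 1) : binEntropy t ≤ t * (1 - log t) := by
  have := negMulLog_le_one_sub_self (sub_nonneg.2 ht)
  rw [binEntropy_eq_negMulLog_add_negMulLog_one_sub, negMulLog]
  linarith

lemma mul_one_sub_log_le_two_mul_sqrt (ht : 0 ≤ t) : t * (1 - log t) ≤ 2 * √(t / exp 1) := by
  rcases ht.eq_or_lt with rfl | ht
  · simp
  set u := √(t / exp 1) with hu_def
  have hu : 0 < u := by positivity
  have ht_eq : t = exp 1 * u ^ 2 := by
    rw [hu_def, sq_sqrt (by positivity)]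
    field_simp
  -- In terms of `u` the claim is `-e u log u ≤ 1`: the tangent bound `e x ≤ exp x` at `x = -log u`.
  have tangent : exp 1 * -log u ≤ u⁻¹ := by
    simpa [exp_neg, exp_log hu] using exp_one_mul_le_exp (x := -log u)
  have hneg_mul_log : exp 1 * u * -log u ≤ 1 := by
    have := mul_le_mul_of_nonneg_left tangent hu.le
    rwa [mul_inv_cancel₀ hu.ne', ← mul_assoc, mul_comm u] at this
  rw [ht_eq, log_mul (exp_pos 1).ne' (by positivity), log_exp, log_pow]
  push_cast
  nlinarith

lemma one_sub_log_le_two_mul_log_div {p c : ℝ} (ht : 0 < t) (hp : 0 < p)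
    (h : exp 1 * p ^ 2 ≤ c ^ 2 * t) : 1 - log t ≤ 2 * log (c / p) := by
  have hc : c ≠ 0 := by
    rintro rfl
    have : 0 < exp 1 * p ^ 2 := by positivity
    simp only [ne_eq, OfNat.ofNat_ne_zero, not_false_eq_true, zero_pow, zero_mul] at h
    linarith
  have := log_le_log (by positivity) h
  rw [log_mul (exp_pos 1).ne' (by positivity), log_mul (pow_ne_zero 2 hc) ht.ne', log_exp,
    log_pow, log_pow] at this
  rw [log_div hc hp.ne']
  push_cast at this
  linarith

end Real

/-- **Lemma A.1 (lower bound on the inverse binary entropy function).**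
For every `p ∈ (0, 1]`, the inverse binary entropy `H₂⁻¹(p)`, i.e. any `t ∈ [0, 1/2]`
with `H₂(t) = p`, satisfies `H₂⁻¹(p) ≥ p / (2 · log₂(6 / p))`. -/
theorem inverse_binary_entropy_lower_bound
    (p : ℝ) (hp : p ∈ Set.Ioc (0 : ℝ) 1)
    (t : ℝ) (ht : t ∈ Set.Icc (0 : ℝ) (1 / 2)) (hH : binEnt t = p) :
    t ≥ p / (2 * Real.logb 2 (6 / p)) := by
  obtain ⟨hp0, hp1⟩ := hp
  obtain ⟨ht0, ht_half⟩ := ht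
  have ht_pos : 0 < t := ht0.lt_of_ne <| by
    rintro rfl
    simp only [binEnt, zero_mul, neg_zero, sub_zero, logb_one, mul_zero] at hH
    linarith
  have hent : p * log 2 ≤ t * (1 - log t) := by
    rw [← hH, binEnt_mul_log_two]
    exact binEntropy_le_mul_one_sub_log (by linarith)
  have ht_ge : exp 1 * p ^ 2 ≤ 6 ^ 2 * t := by
    have hsq := (le_sqrt (by positivity) (by positivity)).1 <|
      show p * log 2 / 2 ≤ √(t / exp 1) by linarith [mul_one_sub_log_le_two_mul_sqrt ht0]
    rw [le_div_iff₀ (exp_pos 1)] at hsq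
    have hlog2_sq : 1 / 9 ≤ log 2 ^ 2 := by nlinarith [log_two_gt_d9]
    calc exp 1 * p ^ 2 = 36 * (exp 1 * p ^ 2 / 4 * (1 / 9)) := by ring
      _ ≤ 36 * (exp 1 * p ^ 2 / 4 * log 2 ^ 2) := by gcongr
      _ = 36 * ((p * log 2 / 2) ^ 2 * exp 1) := by ring
      _ ≤ 6 ^ 2 * t := by linarith
  have hlogb : 0 < logb 2 (6 / p) := logb_pos one_lt_two (by rw [lt_div_iff₀ hp0]; linarith)
  rw [ge_iff_le, div_le_iff₀ (by positivity), logb, ← mul_le_mul_iff_left₀ (log_pos one_lt_two)]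
  calc p * log 2 ≤ t * (1 - log t) := hent
    _ ≤ t * (2 * log (6 / p)) := by gcongr; exact one_sub_log_le_two_mul_log_div ht_pos hp0 ht_ge
    _ = t * (2 * (log (6 / p) / log 2)) * log 2 := by field_simp
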